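/- arXiv:2103.05281 — 5 statements merged into one kernel-verified Lean document; each statement's English description precedes it below -/
import Mathlib

section
/- For every R ≥ 2 there exist R real symmetric matrices A_1, ..., A_R of size 2^{R-1} × 2^{R-1} such that for all (t_1,...,t_R) ∈ ℝ^R \ {0}, det(t_1 A_1 + ... + t_R A_R) ≠ 0. -/
open Matrix

lemma clifford_aux (R : ℕ) : ∃ A : Fin (R+1) → Matrix (Fin (2^R)) (Fin (2^R)) ℝ,
    (∀ r, (A r).IsSymm) ∧ (∀ r, A r * A r = 1) ∧
    ∀ r s, r ≠ s → A r * A s = -(A s * A r) := by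
  induction R with
  | zero =>
    exact ⟨fun _ => 1, fun _ => Matrix.isSymm_one, fun _ => by simp,
      fun r s h => absurd (Fin.ext (by omega)) h⟩
  | succ n ih =>
    obtain ⟨A, hsymm, hsq, hanti⟩ := ih
    have hcard : 2^n + 2^n = 2^(n+1) := by ring
    let e : Fin (2^n) ⊕ Fin (2^n) ≃ Fin (2^(n+1)) := finSumFinEquiv.trans (finCongr hcard)
    let φ := Matrix.reindexAlgEquiv ℝ ℝ e
    have hφsymm : ∀ M : Matrix (Fin (2^n) ⊕ Fin (2^n)) (Fin (2^n) ⊕ Fin (2^n)) ℝ,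
        M.IsSymm → (φ M).IsSymm := by
      intro M hM
      have h1 : φ M = M.submatrix e.symm e.symm := rfl
      rw [Matrix.IsSymm, h1, Matrix.transpose_submatrix, hM]
    refine ⟨Fin.lastCases (φ (Matrix.fromBlocks 1 0 0 (-1)))
      (fun i => φ (Matrix.fromBlocks 0 (A i) (A i) 0)), ?_, ?_, ?_⟩
    · intro r
      refine Fin.lastCases ?_ (fun i => ?_) r
      · simp only [Fin.lastCases_last]
        refine hφsymm _ ?_
        simp [Matrix.IsSymm, Matrix.fromBlocks_transpose]
      · simp only [Fin.lastCases_castSucc]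
        refine hφsymm _ ?_
        simp [Matrix.IsSymm, Matrix.fromBlocks_transpose, (hsymm i).eq]
    · intro r
      refine Fin.lastCases ?_ (fun i => ?_) r
      · simp only [Fin.lastCases_last]
        have h1 : (Matrix.fromBlocks 1 0 0 (-1) : Matrix (Fin (2^n) ⊕ Fin (2^n)) (Fin (2^n) ⊕ Fin (2^n)) ℝ) *
            Matrix.fromBlocks 1 0 0 (-1) = 1 := by
          rw [Matrix.fromBlocks_multiply]
          simp [← Matrix.fromBlocks_one]
        rw [← _root_.map_mul φ, h1, _root_.map_one]
      · simp only [Fin.lastCases_castSucc]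
        have h1 : (Matrix.fromBlocks 0 (A i) (A i) 0 : Matrix (Fin (2^n) ⊕ Fin (2^n)) (Fin (2^n) ⊕ Fin (2^n)) ℝ) *
            Matrix.fromBlocks 0 (A i) (A i) 0 = 1 := by
          rw [Matrix.fromBlocks_multiply]
          simp [hsq i, ← Matrix.fromBlocks_one]
        rw [← _root_.map_mul φ, h1, _root_.map_one]
    · intro r s
      refine Fin.lastCases ?_ (fun i => ?_) r <;> refine Fin.lastCases ?_ (fun j => ?_) s <;>
        intro hrs
      · exact absurd rfl hrs
      · simp only [Fin.lastCases_last, Fin.lastCases_castSucc]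
        rw [← _root_.map_mul φ, ← _root_.map_mul φ, ← _root_.map_neg φ]
        congr 1
        rw [Matrix.fromBlocks_multiply, Matrix.fromBlocks_multiply, Matrix.fromBlocks_neg]
        simp
      · simp only [Fin.lastCases_last, Fin.lastCases_castSucc]
        rw [← _root_.map_mul φ, ← _root_.map_mul φ, ← _root_.map_neg φ]
        congr 1
        rw [Matrix.fromBlocks_multiply, Matrix.fromBlocks_multiply, Matrix.fromBlocks_neg]
        simp
      · simp only [Fin.lastCases_castSucc]
        rw [← _root_.map_mul φ, ← _root_.map_mul φ, ← _root_.map_neg φ]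
        have hij : i ≠ j := fun h => hrs (congrArg Fin.castSucc h)
        congr 1
        rw [Matrix.fromBlocks_multiply, Matrix.fromBlocks_multiply, Matrix.fromBlocks_neg]
        simp [hanti i j hij]

theorem stmt_0 (R : ℕ) (hR : 2 ≤ R) :
    ∃ A : Fin R → Matrix (Fin (2 ^ (R - 1))) (Fin (2 ^ (R - 1))) ℝ,
      (∀ r, (A r).IsSymm) ∧
      ∀ t : Fin R → ℝ, t ≠ 0 → (∑ r, t r • A r).det ≠ 0 := by
  obtain ⟨R', rfl⟩ : ∃ R', R = R' + 1 := ⟨R - 1, by omega⟩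
  obtain ⟨A, hsymm, hsq, hanti⟩ := clifford_aux R'
  refine ⟨A, hsymm, ?_⟩
  intro t ht
  set M := ∑ r, t r • A r with hM
  have expand : M * M = ∑ i, ∑ j, (t i * t j) • (A i * A j) := by
    rw [hM, Finset.sum_mul_sum]
    refine Finset.sum_congr rfl fun i _ => Finset.sum_congr rfl fun j _ => ?_
    rw [smul_mul_assoc, mul_smul_comm, smul_smul]
  have swap : (∑ i, ∑ j, (t i * t j) • (A i * A j))
      = ∑ i, ∑ j, (t j * t i) • (A j * A i) := Finset.sum_comm
  have key : M * M = (∑ r, t r * t r) • (1 : Matrix (Fin (2^R')) (Fin (2^R')) ℝ) := by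
    have h2 : M * M + M * M = ∑ i, ((t i * t i) • (A i * A i) + (t i * t i) • (A i * A i)) := by
      calc M * M + M * M
          = ∑ i, ∑ j, ((t i * t j) • (A i * A j) + (t j * t i) • (A j * A i)) := by
            rw [expand]
            nth_rewrite 2 [swap]
            rw [← Finset.sum_add_distrib]
            exact Finset.sum_congr rfl fun i _ => (Finset.sum_add_distrib).symm
        _ = _ := by
            refine Finset.sum_congr rfl fun i _ => ?_
            have hterm : ∀ j, (t i * t j) • (A i * A j) + (t j * t i) • (A j * A i)
                = if j = i then (t i * t i) • (A i * A i) + (t i * t i) • (A i * A i) else 0 := by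
              intro j
              by_cases h : j = i
              · subst h; simp
              · rw [if_neg h, hanti j i h, mul_comm (t j), smul_neg, add_neg_cancel]
            rw [Finset.sum_congr rfl fun j _ => hterm j, Finset.sum_ite_eq' Finset.univ i]
            simp
    have h2' : (2:ℝ) • (M * M) = (2:ℝ) • ∑ i, (t i * t i) • (A i * A i) := by
      rw [two_smul, two_smul, h2, ← Finset.sum_add_distrib]
    have h3 := smul_right_injective (Matrix (Fin (2^R')) (Fin (2^R')) ℝ)
      (two_ne_zero (α := ℝ)) h2'
    rw [h3, Finset.sum_smul]
    exact Finset.sum_congr rfl fun i _ => by rw [hsq i]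
  have hc : 0 < ∑ r, t r * t r := by
    obtain ⟨i, hi⟩ := Function.ne_iff.mp ht
    exact Finset.sum_pos' (fun j _ => mul_self_nonneg _)
      ⟨i, Finset.mem_univ _, mul_self_pos.mpr hi⟩
  have hdet : M.det * M.det = (∑ r, t r * t r) ^ (2^R') := by
    rw [← Matrix.det_mul, key, Matrix.det_smul, Matrix.det_one, mul_one]
    simp
  intro h0
  have h0' : M.det = 0 := h0
  have hz : (∑ r, t r * t r) ^ (2^R') = 0 := by rw [← hdet, h0', mul_zero]
  exact absurd hz (pow_ne_zero _ hc.ne')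
end

section
/- With A_R as in the recursive block construction, (det A_R(t_1,...,t_R))^2 = (t_1^2 + ... + t_R^2)^{2^{R-1}} for all R ≥ 2 and all real t_1,...,t_R. Consequently det A_R(t_1,...,t_R) ≠ 0 whenever (t_1,...,t_R) ≠ 0. -/
/-- The recursive block construction: `AR k t` is the matrix `A_{k+2}(t_1, …, t_{k+2})`
of size `2^(k+1) × 2^(k+1)` from the paper. -/
noncomputable def AR : (k : ℕ) → (Fin (k + 2) → ℝ) →
    Matrix (Fin (2 ^ (k + 1))) (Fin (2 ^ (k + 1))) ℝ
  | 0, t => !![t 1, t 0; t 0, -t 1]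
  | (k + 1), t =>
      Matrix.reindex (finSumFinEquiv.trans (finCongr (by ring)))
        (finSumFinEquiv.trans (finCongr (by ring)))
        (Matrix.fromBlocks (t (Fin.last (k + 2)) • 1) (AR k (t ∘ Fin.castSucc))
          (AR k (t ∘ Fin.castSucc)) (-(t (Fin.last (k + 2))) • 1))

lemma AR_mul_self (k : ℕ) (t : Fin (k + 2) → ℝ) :
    AR k t * AR k t = (∑ i, t i ^ 2) • 1 := by
  induction k with
  | zero =>
      simp only [AR, Fin.sum_univ_two]
      ext i j
      fin_cases i <;> fin_cases j <;>
        simp [Matrix.mul_apply, Fin.sum_univ_two, Matrix.one_apply] <;> ring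
  | succ k ih =>
      have hsum : (∑ i, t i ^ 2) =
          (∑ i, (t ∘ Fin.castSucc) i ^ 2) + t (Fin.last (k + 2)) ^ 2 := by
        rw [Fin.sum_univ_castSucc]; rfl
      set c := t (Fin.last (k + 2)) with hc
      set B := AR k (t ∘ Fin.castSucc) with hB
      set s := ∑ i, (t ∘ Fin.castSucc) i ^ 2 with hs
      show Matrix.reindex _ _ _ * Matrix.reindex _ _ _ = _
      simp only [Matrix.reindex_apply]
      rw [Matrix.submatrix_mul_equiv, Matrix.fromBlocks_multiply]
      have h1 : c • (1 : Matrix (Fin (2 ^ (k+1))) (Fin (2 ^ (k+1))) ℝ) * (c • 1) + B * B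
          = (s + c ^ 2) • 1 := by
        rw [ih, smul_mul_smul_comm, one_mul, add_smul, sq]
        exact add_comm _ _
      have h2 : c • (1 : Matrix (Fin (2 ^ (k+1))) (Fin (2 ^ (k+1))) ℝ) * B + B * (-c • 1)
          = 0 := by
        rw [Matrix.smul_mul, Matrix.mul_smul, one_mul, Matrix.mul_one, neg_smul, add_neg_cancel]
      have h3 : B * (c • (1 : Matrix (Fin (2 ^ (k+1))) (Fin (2 ^ (k+1))) ℝ)) + -c • 1 * B
          = 0 := by
        rw [Matrix.smul_mul, Matrix.mul_smul, one_mul, Matrix.mul_one, neg_smul, add_neg_cancel]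
      have h4 : B * B + -c • (1 : Matrix (Fin (2 ^ (k+1))) (Fin (2 ^ (k+1))) ℝ) * (-c • 1)
          = (s + c ^ 2) • 1 := by
        rw [ih, smul_mul_smul_comm, one_mul, neg_mul_neg, add_smul, ← sq]
      rw [h1, h2, h3, h4, hsum]
      have : Matrix.fromBlocks ((s + c ^ 2) • (1 : Matrix (Fin (2 ^ (k+1))) (Fin (2 ^ (k+1))) ℝ)) 0 0
          ((s + c ^ 2) • 1) = (s + c ^ 2) •
          (1 : Matrix (Fin (2 ^ (k+1)) ⊕ Fin (2 ^ (k+1))) (Fin (2 ^ (k+1)) ⊕ Fin (2 ^ (k+1))) ℝ) := by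
        rw [← Matrix.fromBlocks_one, Matrix.fromBlocks_smul, smul_zero]
      rw [this]
      ext i j
      simp [Matrix.submatrix, Matrix.one_apply, Fin.ext_iff]

theorem stmt_2 (k : ℕ) (t : Fin (k + 2) → ℝ) :
    ((AR k t).det) ^ 2 = (∑ i, t i ^ 2) ^ (2 ^ (k + 1)) ∧
    (t ≠ 0 → (AR k t).det ≠ 0) := by
  have hdet : ((AR k t).det) ^ 2 = (∑ i, t i ^ 2) ^ (2 ^ (k + 1)) := by
    rw [sq, ← Matrix.det_mul, AR_mul_self, Matrix.det_smul, Matrix.det_one, mul_one,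
      Fintype.card_fin]
  refine ⟨hdet, fun ht hd => ?_⟩
  have hpos : 0 < ∑ i, t i ^ 2 := by
    obtain ⟨i, hi⟩ := Function.ne_iff.mp ht
    exact Finset.sum_pos' (fun j _ => sq_nonneg _)
      ⟨i, Finset.mem_univ i, lt_of_le_of_ne (sq_nonneg _) (Ne.symm (pow_ne_zero 2 hi))⟩
  have : (0:ℝ) < (∑ i, t i ^ 2) ^ (2 ^ (k + 1)) := pow_pos hpos _
  rw [← hdet, hd] at this
  simp at this
end

section
/- Under the hypotheses of the previous compactness lemma, τ > 0 can be chosen so that in addition the map x ↦ ∇_x G(x,t) is injective (indeed a C^1 diffeomorphism onto its image) on the closed box of radius τ around x_0, simultaneously for all t in the compact set F_2. -/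
/-- The Hessian matrix in the `x`-variables of `(x, t) ↦ G x t` at `x`, for fixed `t`. -/
noncomputable def HessX {n m : ℕ} (G : (Fin n → ℝ) → (Fin m → ℝ) → ℝ)
    (t : Fin m → ℝ) (x : Fin n → ℝ) : Matrix (Fin n) (Fin n) ℝ :=
  Matrix.of fun i j =>
    fderiv ℝ (fun z => fderiv ℝ (fun w => G w t) z (Pi.single j (1 : ℝ))) x
      (Pi.single i (1 : ℝ))

/-- The gradient in the `x`-variables of `(x, t) ↦ G x t` at `x`, for fixed `t`. -/
noncomputable def gradX {n m : ℕ} (G : (Fin n → ℝ) → (Fin m → ℝ) → ℝ)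
    (t : Fin m → ℝ) (x : Fin n → ℝ) : Fin n → ℝ :=
  fun i => fderiv ℝ (fun w => G w t) x (Pi.single i (1 : ℝ))

/-!
Near `x₀` the Hessian `H_t(x)` is close to `H_t(x₀)`, uniformly for `t` in the compact set `F₂`
(tube lemma): on a small closed ball its determinant stays nonzero and
`‖H_t(x₀)⁻¹ H_t(x) - 1‖ < 1/2`. Compactness of the ball times `F₂` then bounds `|det H_t(x)|`
above and below, and by the mean value inequality `x ↦ x - H_t(x₀)⁻¹ ∇ₓG(x, t)` is a
`1/2`-contraction on the (convex) ball, so `∇ₓG(·, t)` is injective there.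
-/

open Filter Topology Function
open scoped Matrix

/-- By the mean value inequality `B ∘ f - id` is `k`-Lipschitz on `s`, so `f x = f y` forces
`‖x - y‖ ≤ k ‖x - y‖`. -/
theorem Convex.injOn_of_hasFDerivWithinAt_of_norm_comp_sub_id_le {E F : Type*}
    [NormedAddCommGroup E] [NormedSpace ℝ E] [NormedAddCommGroup F] [NormedSpace ℝ F]
    {f : E → F} {f' : E → E →L[ℝ] F} {s : Set E} (hs : Convex ℝ s)
    (hf : ∀ x ∈ s, HasFDerivWithinAt f (f' x) s x) (B : F →L[ℝ] E) {k : ℝ} (hk : k < 1)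
    (hB : ∀ x ∈ s, ‖B ∘L f' x - ContinuousLinearMap.id ℝ E‖ ≤ k) : Set.InjOn f s := by
  intro x hx y hy hxy
  have hmv := hs.norm_image_sub_le_of_norm_hasFDerivWithin_le'
    (fun z hz => B.hasFDerivAt.comp_hasFDerivWithinAt z (hf z hz)) hB hx hy
  simp only [comp_apply, hxy, sub_self, zero_sub, norm_neg, ContinuousLinearMap.id_apply] at hmv
  have hdist : ‖y - x‖ = 0 := by nlinarith [norm_nonneg (y - x)]
  exact (sub_eq_zero.1 (norm_eq_zero.1 hdist)).symm

section MulVecCLM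

variable {ι : Type*} [Fintype ι] [DecidableEq ι]

noncomputable def mulVecCLM : Matrix ι ι ℝ →ₗ[ℝ] (ι → ℝ) →L[ℝ] (ι → ℝ) :=
  LinearMap.toContinuousLinearMap.toLinearMap ∘ₗ Matrix.toLin'.toLinearMap

@[simp] lemma mulVecCLM_apply (M : Matrix ι ι ℝ) (v : ι → ℝ) : mulVecCLM M v = M *ᵥ v := rfl

lemma continuous_mulVecCLM : Continuous (mulVecCLM : Matrix ι ι ℝ → _) :=
  LinearMap.continuous_of_finiteDimensional _

lemma mulVecCLM_inv_comp_self {M : Matrix ι ι ℝ} (h : M.det ≠ 0) :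
    mulVecCLM M⁻¹ ∘L mulVecCLM M = ContinuousLinearMap.id ℝ (ι → ℝ) := by
  ext1 v
  simp [Matrix.mulVec_mulVec, Matrix.nonsing_inv_mul _ h.isUnit]

lemma eventually_norm_mulVecCLM_inv_comp_sub_id_lt {X : Type*} [TopologicalSpace X]
    {M N : X → Matrix ι ι ℝ} {a : X} (hM : ContinuousAt M a) (hN : ContinuousAt N a)
    (hMN : M a = N a) (hdet : (M a).det ≠ 0) {ε : ℝ} (hε : 0 < ε) :
    ∀ᶠ p in 𝓝 a, ‖mulVecCLM (M p)⁻¹ ∘L mulVecCLM (N p) - ContinuousLinearMap.id ℝ _‖ < ε := by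
  have hinv : ContinuousAt (fun p => (M p)⁻¹) a :=
    (continuousAt_matrix_inv _ (by rw [Ring.inverse_eq_inv']; exact continuousAt_inv₀ hdet)).comp hM
  have hcont : ContinuousAt
      (fun p => ‖mulVecCLM (M p)⁻¹ ∘L mulVecCLM (N p) - ContinuousLinearMap.id ℝ _‖) a :=
    (((continuous_mulVecCLM.continuousAt.comp hinv).clm_comp
      (continuous_mulVecCLM.continuousAt.comp hN)).sub continuousAt_const).norm
  refine hcont.eventually_lt continuousAt_const ?_
  simpa [← hMN, mulVecCLM_inv_comp_self hdet] using hε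

end MulVecCLM

lemma IsCompact.exists_pos_lower_upper_bound {X : Type*} [TopologicalSpace X] {K : Set X}
    (hK : IsCompact K) {f : X → ℝ} (hf : ContinuousOn f K) (hpos : ∀ x ∈ K, 0 < f x) :
    ∃ c1 > (0 : ℝ), ∃ c2 > (0 : ℝ), ∀ x ∈ K, c1 ≤ f x ∧ f x ≤ c2 := by
  obtain ⟨c1, hc1, hle⟩ := hK.exists_forall_le' hf hpos
  obtain ⟨C, hC⟩ := hK.exists_bound_of_continuousOn hf
  refine ⟨c1, hc1, max C 1, by positivity, fun x hx => ⟨hle x hx, ?_⟩⟩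
  exact (le_abs_self _).trans ((hC x hx).trans (le_max_left _ _))

section Slices

variable {n m : ℕ} {U : Set ((Fin n → ℝ) × (Fin m → ℝ))}
  {G : (Fin n → ℝ) → (Fin m → ℝ) → ℝ} {x : Fin n → ℝ} {t : Fin m → ℝ}

lemma gradX_eq_fderiv_uncurry (hU : IsOpen U) (hG : ContDiffOn ℝ 2 (uncurry G) U)
    (h : (x, t) ∈ U) (i : Fin n) :
    gradX G t x i = fderiv ℝ (uncurry G) (x, t) (Pi.single i 1, 0) := by
  have hΦ : HasFDerivAt (uncurry G) (fderiv ℝ (uncurry G) (x, t)) (x, t) :=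
    ((hG.contDiffAt (hU.mem_nhds h)).differentiableAt (by norm_num)).hasFDerivAt
  have hslice := (hΦ.comp x (hasFDerivAt_prodMk_left (𝕜 := ℝ) x t)).fderiv
  exact congrArg (· (Pi.single i 1)) hslice

lemma hasFDerivAt_fderiv_uncurry_slice (hU : IsOpen U) (hG : ContDiffOn ℝ 2 (uncurry G) U)
    (h : (x, t) ∈ U) :
    HasFDerivAt (fun z => fderiv ℝ (uncurry G) (z, t))
      (fderiv ℝ (fderiv ℝ (uncurry G)) (x, t) ∘L ContinuousLinearMap.inl ℝ _ _) x := by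
  have hΦ' : ContDiffOn ℝ 1 (fderiv ℝ (uncurry G)) U := hG.fderiv_of_isOpen hU (by norm_num)
  exact ((hΦ'.contDiffAt (hU.mem_nhds h)).differentiableAt one_ne_zero).hasFDerivAt.comp x
    (hasFDerivAt_prodMk_left (𝕜 := ℝ) x t)

lemma hasFDerivAt_gradX_apply (hU : IsOpen U) (hG : ContDiffOn ℝ 2 (uncurry G) U)
    (h : (x, t) ∈ U) (j : Fin n) :
    HasFDerivAt (fun z => gradX G t z j)
      (ContinuousLinearMap.apply ℝ ℝ (Pi.single j 1, 0) ∘L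
        fderiv ℝ (fderiv ℝ (uncurry G)) (x, t) ∘L ContinuousLinearMap.inl ℝ _ _) x := by
  have hslice : ∀ᶠ z in 𝓝 x, (z, t) ∈ U :=
    (continuous_id.prodMk continuous_const).continuousAt.preimage_mem_nhds (hU.mem_nhds h)
  refine ((ContinuousLinearMap.apply ℝ ℝ _).hasFDerivAt.comp x
    (hasFDerivAt_fderiv_uncurry_slice hU hG h)).congr_of_eventuallyEq ?_
  exact hslice.mono fun z hz => gradX_eq_fderiv_uncurry hU hG hz j

lemma hessX_eq_fderiv_fderiv_uncurry (hU : IsOpen U) (hG : ContDiffOn ℝ 2 (uncurry G) U)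
    (h : (x, t) ∈ U) (i j : Fin n) :
    HessX G t x i j =
      fderiv ℝ (fderiv ℝ (uncurry G)) (x, t) (Pi.single i 1, 0) (Pi.single j 1, 0) := by
  show fderiv ℝ (fun z => gradX G t z j) x (Pi.single i 1) = _
  rw [(hasFDerivAt_gradX_apply hU hG h j).fderiv]
  rfl

lemma continuousOn_hessX (hU : IsOpen U) (hG : ContDiffOn ℝ 2 (uncurry G) U) :
    ContinuousOn (fun p : (Fin n → ℝ) × (Fin m → ℝ) => HessX G p.2 p.1) U := by
  have h2 : ContinuousOn (fderiv ℝ (fderiv ℝ (uncurry G))) U :=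
    (hG.fderiv_of_isOpen hU (by norm_num)).continuousOn_fderiv_of_isOpen hU le_rfl
  refine continuousOn_pi.2 fun i => continuousOn_pi.2 fun j => ?_
  refine ((h2.clm_apply (continuousOn_const (c := (Pi.single i 1, 0)))).clm_apply
    (continuousOn_const (c := (Pi.single j 1, 0)))).congr fun p hp => ?_
  exact hessX_eq_fderiv_fderiv_uncurry hU hG hp i j

/-- `HessX G t x i j` differentiates the `j`-th partial derivative in the direction `i`, hence the
transpose. -/
lemma hasFDerivAt_gradX (hU : IsOpen U) (hG : ContDiffOn ℝ 2 (uncurry G) U)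
    (h : (x, t) ∈ U) : HasFDerivAt (gradX G t) (mulVecCLM (HessX G t x)ᵀ) x := by
  refine hasFDerivAt_pi'.2 fun i => ?_
  refine (hasFDerivAt_gradX_apply hU hG h i).congr_fderiv ?_
  refine ContinuousLinearMap.coe_injective (LinearMap.pi_ext' fun j => LinearMap.ext_ring ?_)
  simp [Matrix.mulVec_single, hessX_eq_fderiv_fderiv_uncurry hU hG h]

lemma eventually_det_hessX_ne_zero_and_norm_inv_comp_sub_id_lt (hU : IsOpen U)
    (hG : ContDiffOn ℝ 2 (uncurry G) U) (h : (x, t) ∈ U) (hdet : (HessX G t x).det ≠ 0)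
    {ε : ℝ} (hε : 0 < ε) :
    ∀ᶠ p : (Fin n → ℝ) × (Fin m → ℝ) in 𝓝 (x, t), (HessX G p.2 p.1).det ≠ 0 ∧
      ‖mulVecCLM (HessX G p.2 x)ᵀ⁻¹ ∘L mulVecCLM (HessX G p.2 p.1)ᵀ -
        ContinuousLinearMap.id ℝ _‖ < ε := by
  have hH : ContinuousAt (fun p => HessX G p.2 p.1) (x, t) :=
    (continuousOn_hessX hU hG).continuousAt (hU.mem_nhds h)
  have hHx : ContinuousAt (fun p : (Fin n → ℝ) × (Fin m → ℝ) => HessX G p.2 x) (x, t) :=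
    hH.comp_of_eq (f := fun p : (Fin n → ℝ) × (Fin m → ℝ) => (x, p.2)) (by fun_prop) rfl
  refine ((continuous_id.matrix_det.continuousAt.comp hH).eventually_ne hdet).and ?_
  exact eventually_norm_mulVecCLM_inv_comp_sub_id_lt
    (continuous_id.matrix_transpose.continuousAt.comp hHx)
    (continuous_id.matrix_transpose.continuousAt.comp hH) rfl (by simpa using hdet) hε

end Slices

theorem stmt_8_general {n m : ℕ} (G1 : Set (Fin n → ℝ)) (G2 : Set (Fin m → ℝ))
    (hG1 : IsOpen G1) (hG2 : IsOpen G2)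
    (G : (Fin n → ℝ) → (Fin m → ℝ) → ℝ)
    (hG : ContDiffOn ℝ 2 (fun p : (Fin n → ℝ) × (Fin m → ℝ) => G p.1 p.2) (G1 ×ˢ G2))
    (x0 : Fin n → ℝ) (hx0 : x0 ∈ G1)
    (hdet : ∀ t ∈ G2, (HessX G t x0).det ≠ 0)
    (F2 : Set (Fin m → ℝ)) (hF2 : IsCompact F2) (hF2sub : F2 ⊆ G2) :
    ∃ τ > (0 : ℝ), Metric.closedBall x0 τ ⊆ G1 ∧
      (∃ c1 > (0 : ℝ), ∃ c2 > (0 : ℝ),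
        ∀ x ∈ Metric.closedBall x0 τ, ∀ t ∈ F2,
          c1 ≤ |(HessX G t x).det| ∧ |(HessX G t x).det| ≤ c2) ∧
      ∀ t ∈ F2, Set.InjOn (gradX G t) (Metric.closedBall x0 τ) := by
  have hU : IsOpen (G1 ×ˢ G2) := hG1.prod hG2
  have hH := continuousOn_hessX hU hG
  have hnear : ∀ᶠ x in 𝓝 x0, ∀ t ∈ F2, (HessX G t x).det ≠ 0 ∧
      ‖mulVecCLM (HessX G t x0)ᵀ⁻¹ ∘L mulVecCLM (HessX G t x)ᵀ - ContinuousLinearMap.id ℝ _‖ <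
        1 / 2 :=
    hF2.eventually_forall_of_forall_eventually fun t ht =>
      eventually_det_hessX_ne_zero_and_norm_inv_comp_sub_id_lt hU hG ⟨hx0, hF2sub ht⟩
        (hdet t (hF2sub ht)) one_half_pos
  obtain ⟨τ, hτ, hball⟩ := Metric.nhds_basis_closedBall.eventually_iff.1
    ((hG1.eventually_mem hx0).and hnear)
  have hKU : Metric.closedBall x0 τ ×ˢ F2 ⊆ G1 ×ˢ G2 := fun p hp => ⟨(hball hp.1).1, hF2sub hp.2⟩
  obtain ⟨c1, hc1, c2, hc2, hbounds⟩ :=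
    ((isCompact_closedBall x0 τ).prod hF2).exists_pos_lower_upper_bound
    (continuous_id.matrix_det.comp_continuousOn (hH.mono hKU)).abs
    fun p hp => abs_pos.2 ((hball hp.1).2 p.2 hp.2).1
  refine ⟨τ, hτ, fun x hx => (hball hx).1,
    ⟨c1, hc1, c2, hc2, fun x hx t ht => hbounds (x, t) ⟨hx, ht⟩⟩, fun t ht => ?_⟩
  exact (convex_closedBall x0 τ).injOn_of_hasFDerivWithinAt_of_norm_comp_sub_id_le
    (fun z hz => (hasFDerivAt_gradX hU hG ⟨(hball hz).1, hF2sub ht⟩).hasFDerivWithinAt)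
    _ one_half_lt_one fun z hz => ((hball hz).2 t ht).2.le

theorem stmt_8 {n m : ℕ} (G1 : Set (Fin n → ℝ)) (G2 : Set (Fin m → ℝ))
    (hG1 : IsOpen G1) (hG2 : IsOpen G2)
    (hG1b : Bornology.IsBounded G1) (hG2b : Bornology.IsBounded G2)
    (hG1c : IsConnected G1) (hG2c : IsConnected G2)
    (G : (Fin n → ℝ) → (Fin m → ℝ) → ℝ)
    (hG : ContDiffOn ℝ 2 (fun p : (Fin n → ℝ) × (Fin m → ℝ) => G p.1 p.2) (G1 ×ˢ G2))
    (x0 : Fin n → ℝ) (hx0 : x0 ∈ G1)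
    (hdet : ∀ t ∈ G2, (HessX G t x0).det ≠ 0)
    (F2 : Set (Fin m → ℝ)) (hF2 : IsCompact F2) (hF2sub : F2 ⊆ G2) :
    ∃ τ > (0 : ℝ), Metric.closedBall x0 τ ⊆ G1 ∧
      (∃ c1 > (0 : ℝ), ∃ c2 > (0 : ℝ),
        ∀ x ∈ Metric.closedBall x0 τ, ∀ t ∈ F2,
          c1 ≤ |(HessX G t x).det| ∧ |(HessX G t x).det| ≤ c2) ∧
      ∀ t ∈ F2, Set.InjOn (gradX G t) (Metric.closedBall x0 τ) :=
  stmt_8_general G1 G2 hG1 hG2 G hG x0 hx0 hdet F2 hF2 hF2sub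
end

section
/- Let D ∈ ℕ and T ≥ 2 with D = ⌊T/2⌋, and let F_D(θ) = (sin(πDθ)/(D sin(πθ)))^2 be the Fejér kernel (extended by continuity at integers θ). If θ ∈ ℝ satisfies 0 < ‖θ‖ ≤ 1/T, where ‖θ‖ is the distance from θ to the nearest integer, then F_D(θ) ≥ 4/π^2. -/
/-!
Summing the geometric series, the norm of the sum is `|sin (π D θ)| / |sin (π θ)|`, and both sines
only depend on `δ = ‖θ‖`. Since `D δ ≤ 1/2`, Jordan's inequality `sin x ≥ 2x/π` bounds the numerator
below by `2 D δ`, while the denominator is at most `π δ`; hence the sum has norm at least `2D/π`.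
-/

open Real Finset Complex

lemma norm_exp_two_pi_mul_I_sub_one (x : ℝ) :
    ‖exp (2 * π * I * x) - 1‖ = 2 * |Real.sin (π * x)| := by
  have h := norm_exp_I_mul_ofReal_sub_one (2 * π * x)
  rw [Real.norm_eq_abs, abs_mul, abs_two, mul_div_right_comm, mul_div_cancel_left₀ _ two_ne_zero]
    at h
  rw [← h]
  push_cast
  ring_nf

lemma norm_sum_Icc_exp_eq (D : ℕ) {θ : ℝ} (hθ : Real.sin (π * θ) ≠ 0) :
    ‖∑ d ∈ Icc 1 D, exp (2 * π * I * d * θ)‖ = |Real.sin (π * D * θ)| / |Real.sin (π * θ)| := by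
  set z := exp (2 * π * I * θ) with hz_def
  have hpow (n : ℕ) : exp (2 * π * I * n * θ) = z ^ n := by
    rw [← Complex.exp_nat_mul]; ring_nf
  have hz_sub_one : ‖z - 1‖ = 2 * |Real.sin (π * θ)| := norm_exp_two_pi_mul_I_sub_one θ
  have hz1 : z ≠ 1 := by
    rintro h
    rw [h, sub_self, norm_zero] at hz_sub_one
    exact hθ (abs_eq_zero.mp (by linarith [abs_nonneg (Real.sin (π * θ))]))
  have hsum : ∑ d ∈ Icc 1 D, z ^ d = z * ((z ^ D - 1) / (z - 1)) := by
    rw [← Ico_add_one_right_eq_Icc, geom_sum_Ico hz1 (Nat.le_add_left 1 D)]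
    ring
  have hzD : ‖z ^ D - 1‖ = 2 * |Real.sin (π * D * θ)| := by
    rw [← hpow, show 2 * π * I * D * θ = 2 * π * I * ((D * θ : ℝ) : ℂ) by push_cast; ring,
      norm_exp_two_pi_mul_I_sub_one, mul_assoc π]
  have hz : ‖z‖ = 1 := by simp [hz_def, Complex.norm_exp]
  rw [sum_congr rfl fun n _ ↦ hpow n, hsum, norm_mul, hz, one_mul, norm_div, hzD, hz_sub_one]
  exact mul_div_mul_left _ _ two_ne_zero

lemma abs_sin_pi_mul_abs_sub_round (n : ℤ) (θ : ℝ) :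
    |Real.sin (π * n * |θ - round θ|)| = |Real.sin (π * n * θ)| := by
  have hshift : π * n * θ = π * n * (θ - round θ) + (n * round θ : ℤ) * π := by push_cast; ring
  rw [hshift, Real.sin_add_int_mul_pi, abs_mul, abs_neg_one_zpow, one_mul]
  rcases abs_choice (θ - round θ) with h | h
  · rw [h]
  · rw [h, mul_neg, Real.sin_neg, abs_neg]

lemma two_mul_div_pi_le_norm_sum_Icc_exp (D : ℕ) {θ : ℝ} (h0 : 0 < |θ - round θ|)
    (hD : D * |θ - round θ| ≤ 1 / 2) :
    2 * D / π ≤ ‖∑ d ∈ Icc 1 D, exp (2 * π * I * d * θ)‖ := by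
  set δ := |θ - round θ|
  have hδ : δ ≤ 1 / 2 := abs_sub_round θ
  have hden_pos : 0 < Real.sin (π * δ) :=
    Real.sin_pos_of_pos_of_lt_pi (by positivity) (by nlinarith [pi_pos])
  have hden : |Real.sin (π * θ)| = Real.sin (π * δ) := by
    rw [← abs_of_pos hden_pos]
    simpa using (abs_sin_pi_mul_abs_sub_round 1 θ).symm
  have hnum_jordan : 2 / π * (π * D * δ) ≤ Real.sin (π * D * δ) :=
    mul_le_sin (by positivity) (by nlinarith [pi_pos])
  have hnum : |Real.sin (π * D * θ)| = Real.sin (π * D * δ) := by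
    rw [← abs_of_nonneg (hnum_jordan.trans' (by positivity))]
    simpa using (abs_sin_pi_mul_abs_sub_round D θ).symm
  rw [norm_sum_Icc_exp_eq D (abs_ne_zero.mp (hden ▸ hden_pos.ne')), hnum, hden,
    div_le_div_iff₀ pi_pos hden_pos]
  calc 2 * D * Real.sin (π * δ)
      ≤ 2 * D * (π * δ) := by gcongr; exact Real.sin_le (by positivity)
    _ = 2 / π * (π * D * δ) * π := by field_simp
    _ ≤ Real.sin (π * D * δ) * π := by gcongr

theorem stmt_12 (T : ℝ) (hT : 2 ≤ T) (D : ℕ) (hD : D = ⌊T / 2⌋₊)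
    (θ : ℝ) (h0 : 0 < |θ - round θ|) (h1 : |θ - round θ| ≤ 1 / T) :
    4 / Real.pi ^ 2 ≤
      ((D : ℝ) ^ 2)⁻¹ *
        ‖∑ d ∈ Finset.Icc 1 D,
          Complex.exp (2 * Real.pi * Complex.I * d * θ)‖ ^ 2 := by
  have hD_pos : (0 : ℝ) < D := by
    rw [hD, Nat.cast_pos, Nat.floor_pos]; linarith
  have hDT : (D : ℝ) ≤ T / 2 := hD ▸ Nat.floor_le (by linarith)
  have hDδ : D * |θ - round θ| ≤ 1 / 2 :=
    calc D * |θ - round θ| ≤ T / 2 * (1 / T) := by gcongr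
      _ = 1 / 2 := by field_simp
  calc 4 / π ^ 2 = ((D : ℝ) ^ 2)⁻¹ * (2 * D / π) ^ 2 := by field_simp; ring
    _ ≤ _ := by gcongr; exact two_mul_div_pi_le_norm_sum_Icc_exp D h0 hDδ
end

section
/- Let χ_δ be the indicator function of {θ ∈ ℝ : ‖θ‖ ≤ δ} with δ = 1/T for T ≥ 2, and let D = ⌊T/2⌋. Then χ_δ(θ) ≤ (π^2/4) ∑_{|d| ≤ D} ((D − |d|)/D^2) e(dθ) for all θ ∈ ℝ. -/
/-!
Write `z = e(θ)` and `S = ∑_{0 ≤ j < D} z ^ j`. Since `|z| = 1`, the Fejér identity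
`∑_{|d| ≤ D} (D - |d|) z ^ d = S * conj S = |S| ^ 2` turns the right-hand side into
`(π ^ 2 / 4) |S| ^ 2 / D ^ 2 ≥ 0`. If `u = θ - round θ` satisfies `|u| ≤ 1 / T`, then
`D |u| ≤ 1 / 2`; now `S (z - 1) = z ^ D - 1` and `|e(t) - 1| = 2 |sin (π t)|`, so Jordan's inequality
`|sin (π D u)| ≥ 2 D |u|` together with `|sin (π u)| ≤ π |u|` gives `|S| ≥ 2 D / π`,
and the right-hand side is at least `1`.
-/

open Finset Complex
open scoped Real

theorem card_filter_sub_eq (D : ℕ) {d : ℤ} (hd : |d| ≤ D) :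
    (#{p ∈ range D ×ˢ range D | (p.1 : ℤ) - p.2 = d} : ℤ) = D - |d| := by
  obtain ⟨hd₁, hd₂⟩ := abs_le.1 hd
  have hcard : #{p ∈ range D ×ˢ range D | (p.1 : ℤ) - p.2 = d}
      = #(Ico d.toNat (D - (-d).toNat)) := by
    refine card_nbij' Prod.fst (fun j => (j, (j - d).toNat)) ?_ ?_ ?_ ?_ <;>
      intro p hp <;> simp only [coe_filter, mem_product, mem_range, Set.mem_ofPred_eq, coe_Ico,
        Set.mem_Ico, Prod.ext_iff, true_and] at hp ⊢ <;> omega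
  rw [hcard, Nat.card_Ico]
  rcases abs_cases d with ⟨h, _⟩ | ⟨h, _⟩ <;> rw [h] <;> omega

theorem sum_pow_mul_sum_inv_pow {K : Type*} [DivisionRing K] {z : K} (hz : z ≠ 0) (D : ℕ) :
    (∑ j ∈ range D, z ^ j) * (∑ k ∈ range D, z⁻¹ ^ k) =
      ∑ d ∈ Icc (-(D : ℤ)) D, ((D : K) - (|d| : ℤ)) * z ^ d := by
  calc (∑ j ∈ range D, z ^ j) * (∑ k ∈ range D, z⁻¹ ^ k)
      = ∑ p ∈ range D ×ˢ range D, z ^ ((p.1 : ℤ) - p.2) := by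
        rw [sum_mul_sum, sum_product]
        refine sum_congr rfl fun j _ => sum_congr rfl fun k _ => ?_
        rw [zpow_sub₀ hz, zpow_natCast, zpow_natCast, inv_pow, div_eq_mul_inv]
    _ = ∑ d ∈ Icc (-(D : ℤ)) D,
          ∑ p ∈ range D ×ˢ range D with (p.1 : ℤ) - p.2 = d, z ^ ((p.1 : ℤ) - p.2) := by
        refine (sum_fiberwise_of_maps_to (fun p hp => ?_) _).symm
        simp only [mem_product, mem_range, mem_Icc] at hp ⊢
        omega
    _ = ∑ d ∈ Icc (-(D : ℤ)) D, ((D : K) - (|d| : ℤ)) * z ^ d := by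
        refine sum_congr rfl fun d hd => ?_
        rw [sum_congr rfl fun p hp => by rw [(mem_filter.1 hp).2], sum_const, nsmul_eq_mul]
        have hd' : |d| ≤ D := abs_le.2 (mem_Icc.1 hd)
        rw [← Int.cast_natCast, card_filter_sub_eq D hd', Int.cast_sub, Int.cast_natCast]

theorem sum_fejer_eq_normSq {z : ℂ} (hz : ‖z‖ = 1) (D : ℕ) :
    ∑ d ∈ Icc (-(D : ℤ)) D, ((D : ℂ) - (|d| : ℤ)) * z ^ d = normSq (∑ j ∈ range D, z ^ j) := by
  have hz0 : z ≠ 0 := norm_ne_zero_iff.1 (hz ▸ one_ne_zero)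
  rw [← sum_pow_mul_sum_inv_pow hz0, inv_eq_conj hz, ← mul_conj, map_sum]
  simp only [map_pow]

theorem norm_exp_two_pi_I_mul_sub_one (t : ℝ) :
    ‖cexp (2 * π * I * t) - 1‖ = 2 * |Real.sin (π * t)| := by
  have h := norm_exp_I_mul_ofReal_sub_one (2 * π * t)
  rw [show I * ((2 * π * t : ℝ) : ℂ) = 2 * π * I * t by push_cast; ring] at h
  rw [h, norm_mul, Real.norm_eq_abs, Real.norm_eq_abs, abs_two]
  ring_nf

theorem norm_exp_two_pi_I_mul_sub_one_le (t : ℝ) :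
    ‖cexp (2 * π * I * t) - 1‖ ≤ 2 * π * |t| := by
  rw [norm_exp_two_pi_I_mul_sub_one]
  calc 2 * |Real.sin (π * t)| ≤ 2 * |π * t| :=
      mul_le_mul_of_nonneg_left Real.abs_sin_le_abs zero_le_two
    _ = 2 * π * |t| := by rw [abs_mul, abs_of_pos Real.pi_pos, mul_assoc]

theorem four_mul_abs_le_norm_exp_two_pi_I_mul_sub_one {t : ℝ} (ht : |t| ≤ 1 / 2) :
    4 * |t| ≤ ‖cexp (2 * π * I * t) - 1‖ := by
  have hπt : |π * t| = π * |t| := by rw [abs_mul, abs_of_pos Real.pi_pos]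
  have hjordan := Real.mul_abs_le_abs_sin (x := π * t) (by rw [hπt]; nlinarith [Real.pi_pos])
  rw [hπt] at hjordan
  rw [norm_exp_two_pi_I_mul_sub_one]
  calc 4 * |t| = 2 * (2 / π * (π * |t|)) := by field_simp; ring
    _ ≤ 2 * |Real.sin (π * t)| := by gcongr

theorem two_mul_div_pi_le_norm_geom_sum (D : ℕ) {u : ℝ} (h : D * |u| ≤ 1 / 2) :
    2 * D / π ≤ ‖∑ j ∈ range D, cexp (2 * π * I * u) ^ j‖ := by
  rcases eq_or_ne u 0 with rfl | hu
  · simp only [ofReal_zero, mul_zero, exp_zero, one_pow, sum_const, card_range, nsmul_eq_mul,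
      mul_one, RCLike.norm_natCast]
    rw [div_le_iff₀ Real.pi_pos]
    nlinarith [Real.pi_gt_three, (Nat.cast_nonneg D : (0 : ℝ) ≤ D)]
  set S := ∑ j ∈ range D, cexp (2 * π * I * u) ^ j
  have hnum : 4 * (D * |u|) ≤ ‖S‖ * ‖cexp (2 * π * I * u) - 1‖ := by
    rw [← norm_mul, geom_sum_mul, ← exp_nat_mul,
      show (D : ℂ) * (2 * π * I * u) = 2 * π * I * ((D * u : ℝ) : ℂ) by push_cast; ring]
    have := four_mul_abs_le_norm_exp_two_pi_I_mul_sub_one (t := D * u)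
      (by rwa [abs_mul, Nat.abs_cast])
    rwa [abs_mul, Nat.abs_cast] at this
  have hden := norm_exp_two_pi_I_mul_sub_one_le u
  have hu' : 0 < |u| := abs_pos.2 hu
  rw [div_le_iff₀ Real.pi_pos]
  nlinarith [mul_le_mul_of_nonneg_left hden (norm_nonneg S)]

theorem sum_fejer_exp_eq (D : ℕ) (θ : ℝ) :
    ∑ d ∈ Icc (-(D : ℤ)) D, (((D : ℂ) - (|d| : ℤ)) / (D : ℂ) ^ 2) * cexp (2 * π * I * d * θ)
      = (normSq (∑ j ∈ range D, cexp (2 * π * I * θ) ^ j) / D ^ 2 : ℝ) := by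
  have hnorm : ‖cexp (2 * π * I * θ)‖ = 1 := by
    rw [show 2 * π * I * θ = ((2 * π * θ : ℝ) : ℂ) * I by push_cast; ring, norm_exp_ofReal_mul_I]
  push_cast
  rw [← sum_fejer_eq_normSq hnorm, sum_div]
  refine sum_congr rfl fun d _ => ?_
  rw [← exp_int_mul, div_mul_eq_mul_div]
  ring_nf

theorem exp_two_pi_I_mul_sub_round (θ : ℝ) :
    cexp (2 * π * I * (θ - round θ : ℝ)) = cexp (2 * π * I * θ) := by
  rw [show 2 * π * I * ((θ - round θ : ℝ) : ℂ)
      = 2 * π * I * θ + ((-round θ : ℤ) : ℂ) * (2 * π * I) by push_cast; ring,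
    exp_add, exp_int_mul_two_pi_mul_I, mul_one]

theorem stmt_13 (T : ℝ) (hT : 2 ≤ T) (D : ℕ) (hD : D = ⌊T / 2⌋₊) (θ : ℝ) :
    (if |θ - round θ| ≤ 1 / T then (1 : ℝ) else 0) ≤
      Real.pi ^ 2 / 4 *
        (∑ d ∈ Finset.Icc (-(D : ℤ)) (D : ℤ),
          (((D : ℂ) - (|d| : ℤ)) / (D : ℂ) ^ 2) *
            Complex.exp (2 * Real.pi * Complex.I * d * θ)).re := by
  rw [sum_fejer_exp_eq, ofReal_re]
  split_ifs with hθ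
  · have hD₀ : (0 : ℝ) < D := by rw [hD]; exact_mod_cast Nat.floor_pos.2 (by linarith)
    have hDT : (D : ℝ) ≤ T / 2 := hD ▸ Nat.floor_le (by linarith)
    have hDu : D * |θ - round θ| ≤ 1 / 2 := calc
      D * |θ - round θ| ≤ T / 2 * (1 / T) := by gcongr
      _ = 1 / 2 := by field_simp
    have hS := two_mul_div_pi_le_norm_geom_sum D hDu
    rw [exp_two_pi_I_mul_sub_round] at hS
    rw [normSq_eq_norm_sq]
    calc (1 : ℝ) = π ^ 2 / 4 * ((2 * D / π) ^ 2 / D ^ 2) := by field_simp; ring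
      _ ≤ _ := by gcongr
  · have := normSq_nonneg (∑ j ∈ range D, cexp (2 * π * I * θ) ^ j)
    positivity
end
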